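/- Let φ, ψ be of class P and let p : ℝ≥0 → ℝ≥0 be locally integrable. Then every maximally defined solution of the comparison system is forward complete (defined on [t0,∞)). Moreover, if a solution z of the comparison system (with any γ ∈ Γ, t0 ≥ 0, z0 ≥ 0) satisfies z(s) = 0 for some s ≥ t0, then z(t) = 0 for all t ≥ s in its domain. -/

import Mathlib

open Set Filter MeasureTheory

noncomputable section

/-- An impulse-time sequence, modeled as a subset of `(0,∞)` whose intersection with any
half-line `(-∞, t]` is finite (equivalently: a strictly increasing, finite or infinite,
sequence of positive reals with no finite limit point). -/
def IsImpulseSeq (γ : Set ℝ) : Prop :=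
  γ ⊆ Set.Ioi (0 : ℝ) ∧ ∀ t : ℝ, (γ ∩ Set.Iic t).Finite

/-- `impCnt γ s t` is the number `n^γ_{(s,t]}` of impulse times in the interval `(s, t]`. -/
def impCnt (γ : Set ℝ) (s t : ℝ) : ℕ := (γ ∩ Set.Ioc s t).ncard

/-- The class `Sup(ρ)` of impulse-time sequences whose impulse frequency is eventually
uniformly upper bounded by `ρ`. -/
def MemSup (ρ : ℝ) (γ : Set ℝ) : Prop :=
  IsImpulseSeq γ ∧ ∀ ε : ℝ, 0 < ε → ∃ T : ℝ, 0 < T ∧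
    ∀ t : ℝ, T ≤ t → ∀ s : ℝ, 0 ≤ s → (impCnt γ s (s + t) : ℝ) / t ≤ ρ + ε

/-- The class `Sdn(ρ)` of impulse-time sequences whose impulse frequency is eventually
uniformly lower bounded by `ρ`. -/
def MemSdn (ρ : ℝ) (γ : Set ℝ) : Prop :=
  IsImpulseSeq γ ∧ ∀ ε : ℝ, 0 < ε → ∃ T : ℝ, 0 < T ∧
    ∀ t : ℝ, T ≤ t → ∀ s : ℝ, 0 ≤ s → ρ - ε ≤ (impCnt γ s (s + t) : ℝ) / t

/-- `S` is a uniform subset of `Sup(ρ)`: the time `T` can be chosen independently of `γ ∈ S`. -/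
def USubSup (ρ : ℝ) (S : Set (Set ℝ)) : Prop :=
  (∀ γ ∈ S, IsImpulseSeq γ) ∧ ∀ ε : ℝ, 0 < ε → ∃ T : ℝ, 0 < T ∧
    ∀ γ ∈ S, ∀ t : ℝ, T ≤ t → ∀ s : ℝ, 0 ≤ s → (impCnt γ s (s + t) : ℝ) / t ≤ ρ + ε

/-- `S` is a uniform subset of `Sdn(ρ)`: the time `T` can be chosen independently of `γ ∈ S`. -/
def USubSdn (ρ : ℝ) (S : Set (Set ℝ)) : Prop :=
  (∀ γ ∈ S, IsImpulseSeq γ) ∧ ∀ ε : ℝ, 0 < ε → ∃ T : ℝ, 0 < T ∧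
    ∀ γ ∈ S, ∀ t : ℝ, T ≤ t → ∀ s : ℝ, 0 ≤ s → ρ - ε ≤ (impCnt γ s (s + t) : ℝ) / t

/-- The average dwell-time class `Sad(n, τ)`. -/
def MemSad (n : ℕ) (τ : ℝ) (γ : Set ℝ) : Prop :=
  IsImpulseSeq γ ∧ ∀ s t : ℝ, 0 ≤ s → s ≤ t → (impCnt γ s t : ℝ) ≤ (n : ℝ) + (t - s) / τ

/-- The reverse average dwell-time class `Srad(n, τ)`. -/
def MemSrad (n : ℕ) (τ : ℝ) (γ : Set ℝ) : Prop :=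
  IsImpulseSeq γ ∧ ∀ s t : ℝ, 0 ≤ s → s ≤ t → -(n : ℝ) + (t - s) / τ ≤ (impCnt γ s t : ℝ)

/-- A function of class `P`: continuous on `[0,∞)`, zero at zero, and positive on `(0,∞)`. -/
def ClassP (α : ℝ → ℝ) : Prop :=
  ContinuousOn α (Set.Ici 0) ∧ α 0 = 0 ∧ ∀ s : ℝ, 0 < s → 0 < α s

/-- `p : [0,∞) → [0,∞)` is nonnegative and locally (Lebesgue) integrable. -/
def LocIntNN (p : ℝ → ℝ) : Prop :=
  (∀ s : ℝ, 0 ≤ p s) ∧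
    ∀ a b : ℝ, 0 ≤ a → a ≤ b → IntervalIntegrable p MeasureTheory.volume a b

/-- A function of class `KL`: continuous on `[0,∞)×[0,∞)`, nonnegative there, for each fixed
`t ≥ 0` strictly increasing in the first argument with value `0` at `0`, for each fixed
`r ≥ 0` strictly decreasing in the second argument whenever positive, and tending to `0` as
the second argument tends to `∞`. -/
def ClassKL (β : ℝ → ℝ → ℝ) : Prop :=
  ContinuousOn (fun q : ℝ × ℝ => β q.1 q.2) (Set.Ici 0 ×ˢ Set.Ici 0) ∧
  (∀ r t : ℝ, 0 ≤ r → 0 ≤ t → 0 ≤ β r t) ∧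
  (∀ t : ℝ, 0 ≤ t → StrictMonoOn (fun r => β r t) (Set.Ici 0) ∧ β 0 t = 0) ∧
  (∀ r : ℝ, 0 ≤ r → ∀ t1 t2 : ℝ, 0 ≤ t1 → t1 < t2 → 0 < β r t1 → β r t2 < β r t1) ∧
  (∀ r : ℝ, 0 ≤ r → Filter.Tendsto (fun t => β r t) Filter.atTop (nhds 0))

/-- `z : [t0, T) → [0,∞)` is a solution of the comparison system
`ż(t) ∈ (−∞, −p(t)φ(z(t))]` for `t ∉ γ`, `z(t) ∈ [0, ψ(z(t⁻))]` for `t ∈ γ`,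
with `z(t0) = z0` (the right endpoint `T` is an extended real, `T = ⊤` meaning a
solution defined on all of `[t0,∞)`).  Between impulse times `z` is continuous, and its
local absolute continuity together with `z' ≤ −p·φ∘z` a.e. is encoded by the integral
inequality `z(b) − z(a) ≤ −∫_a^b p(s)φ(z(s)) ds` on impulse-free subintervals;
at each impulse time in `(t0, T)` the left limit exists and the jump condition holds. -/
structure IsCompSol (p φ ψ : ℝ → ℝ) (γ : Set ℝ) (t0 : ℝ) (T : EReal) (z0 : ℝ)
    (z : ℝ → ℝ) : Prop where
  dom : (t0 : EReal) < T
  init : z t0 = z0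
  nonneg : ∀ t : ℝ, t0 ≤ t → (t : EReal) < T → 0 ≤ z t
  flow_cont : ∀ a b : ℝ, t0 ≤ a → a ≤ b → (b : EReal) < T → γ ∩ Set.Ioc a b = ∅ →
    ContinuousOn z (Set.Icc a b)
  flow_int : ∀ a b : ℝ, t0 ≤ a → a ≤ b → (b : EReal) < T → γ ∩ Set.Ioc a b = ∅ →
    IntervalIntegrable (fun s => p s * φ (z s)) MeasureTheory.volume a b ∧
      z b - z a ≤ - ∫ s in a..b, p s * φ (z s)
  jump : ∀ τ ∈ γ, t0 < τ → (τ : EReal) < T →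
    ∃ L : ℝ, Filter.Tendsto z (nhdsWithin τ (Set.Iio τ)) (nhds L) ∧ z τ ≤ ψ L

/-- The comparison system is weakly GUAS uniformly over the family `S` of impulse-time
sequences. -/
def WeakGUAS (p φ ψ : ℝ → ℝ) (S : Set (Set ℝ)) : Prop :=
  ∃ β : ℝ → ℝ → ℝ, ClassKL β ∧
    ∀ γ ∈ S, ∀ t0 : ℝ, 0 ≤ t0 → ∀ z0 : ℝ, 0 ≤ z0 → ∀ (T : EReal) (z : ℝ → ℝ),
      IsCompSol p φ ψ γ t0 T z0 z →
        ∀ t : ℝ, t0 ≤ t → (t : EReal) < T → z t ≤ β z0 (t - t0)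

/-- The comparison system is strongly GUAS uniformly over the family `S` of impulse-time
sequences (the decay also counts the number of impulses). -/
def StrongGUAS (p φ ψ : ℝ → ℝ) (S : Set (Set ℝ)) : Prop :=
  ∃ β : ℝ → ℝ → ℝ, ClassKL β ∧
    ∀ γ ∈ S, ∀ t0 : ℝ, 0 ≤ t0 → ∀ z0 : ℝ, 0 ≤ z0 → ∀ (T : EReal) (z : ℝ → ℝ),
      IsCompSol p φ ψ γ t0 T z0 z →
        ∀ t : ℝ, t0 ≤ t → (t : EReal) < T →
          z t ≤ β z0 (t - t0 + (impCnt γ t0 t : ℝ))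

/-- `S` is uniformly incrementally bounded (UIB). -/
def UIB (S : Set (Set ℝ)) : Prop :=
  ∃ φ₀ : ℝ → ℝ, ContinuousOn φ₀ (Set.Ioi 0) ∧ MonotoneOn φ₀ (Set.Ioi 0) ∧
    ∀ γ ∈ S, ∀ s t : ℝ, 0 ≤ s → s < t → (impCnt γ s t : ℝ) ≤ φ₀ (t - s)

/-- `M = sup_{a > 0} ∫_a^{ψ(a)} ds/φ(s)`. -/
def Mval (φ ψ : ℝ → ℝ) : ℝ :=
  sSup {y : ℝ | ∃ a : ℝ, 0 < a ∧ y = ∫ s in a..(ψ a), 1 / φ s}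

/-- `N = inf_{t ≥ 0} ∫_t^{t+θ} p(s) ds`. -/
def Nval (p : ℝ → ℝ) (θ : ℝ) : ℝ :=
  sInf {y : ℝ | ∃ t : ℝ, 0 ≤ t ∧ y = ∫ s in t..(t + θ), p s}

/-- `z` is a maximally defined solution of the comparison system: it is a solution and
admits no proper extension which is again a solution. -/
def IsMaxCompSol (p φ ψ : ℝ → ℝ) (γ : Set ℝ) (t0 : ℝ) (T : EReal) (z0 : ℝ)
    (z : ℝ → ℝ) : Prop :=
  IsCompSol p φ ψ γ t0 T z0 z ∧
    ¬ ∃ (T' : EReal) (z' : ℝ → ℝ), T < T' ∧ IsCompSol p φ ψ γ t0 T' z0 z' ∧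
        ∀ t : ℝ, t0 ≤ t → (t : EReal) < T → z' t = z t

/-!
A solution is nonincreasing between impulses, since `p φ(z) ≥ 0`. So at a finite right end `T` of
its domain it has a left limit `L ≥ 0`, and, impulse times being locally finite, no impulse occurs
shortly before or after `T`. If `φ ≤ K` on `[0, c]`, the barrier `max (c - K ∫_T^t p) 0` satisfies
the flow inequality; started at `c = L`, or at `c = 0 ≤ ψ L` if `T` is an impulse time, it continues
the solution beyond `T`, so a maximal solution is defined on `[t0, ∞)`. A zero propagates forward by
induction on the number of impulses: flows keep `0` at `0` as `φ ≥ 0`, and jumps do as `ψ 0 = 0`.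
-/
open Topology

theorem ClassP.nonneg {φ : ℝ → ℝ} (hφ : ClassP φ) {x : ℝ} (hx : 0 ≤ x) : 0 ≤ φ x := by
  rcases hx.eq_or_lt with rfl | hx
  · exact hφ.2.1.ge
  · exact (hφ.2.2 x hx).le

namespace IsImpulseSeq

variable {γ : Set ℝ}

theorem finite_inter_Ioc (hγ : IsImpulseSeq γ) (s t : ℝ) : (γ ∩ Ioc s t).Finite :=
  (hγ.2 t).subset (inter_subset_inter_right _ Ioc_subset_Iic_self)

theorem exists_pos_inter_Ioo_eq_empty (hγ : IsImpulseSeq γ) (x : ℝ) :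
    ∃ ε > 0, γ ∩ Ioo (x - ε) x = ∅ ∧ γ ∩ Ioo x (x + ε) = ∅ := by
  have hS : IsClosed ((γ ∩ Iic (x + 1)) \ {x}) := ((hγ.2 _).sdiff).isClosed
  obtain ⟨ε, hε, hball⟩ :=
    Metric.mem_nhds_iff.1 (hS.isOpen_compl.mem_nhds fun h => h.2 rfl)
  have hfar : ∀ y ∈ γ, y ≠ x → |y - x| < min ε 1 → False := fun y hy hyx hd =>
    hball (Metric.mem_ball.2 ((Real.dist_eq y x).trans_lt (hd.trans_le (min_le_left _ _))))
      ⟨⟨hy, mem_Iic.2 (by linarith [(abs_lt.1 (hd.trans_le (min_le_right _ _))).2])⟩, hyx⟩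
  refine ⟨min ε 1, by positivity, ?_, ?_⟩
  · refine eq_empty_iff_forall_notMem.2 fun y ⟨hy, h1, h2⟩ => hfar y hy h2.ne ?_
    rw [abs_lt]; constructor <;> linarith
  · refine eq_empty_iff_forall_notMem.2 fun y ⟨hy, h1, h2⟩ => hfar y hy h1.ne' ?_
    rw [abs_lt]; constructor <;> linarith

end IsImpulseSeq

/-- The flow inequality `z' ≤ -p φ(z)` on `[a, b]`, in the integrated form of the fields
`flow_cont` and `flow_int` of `IsCompSol`. -/
def FlowIneqOn (p φ z : ℝ → ℝ) (a b : ℝ) : Prop :=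
  ContinuousOn z (Icc a b) ∧ IntervalIntegrable (fun s => p s * φ (z s)) volume a b ∧
    z b - z a ≤ -∫ s in a..b, p s * φ (z s)

theorem intervalIntegrable_mul_comp {p φ w : ℝ → ℝ} {a b : ℝ} (hφ : ContinuousOn φ (Ici 0))
    (hp : IntervalIntegrable p volume a b) (hab : a ≤ b) (hw : ContinuousOn w (Icc a b))
    (hw0 : ∀ s ∈ Icc a b, 0 ≤ w s) :
    IntervalIntegrable (fun s => p s * φ (w s)) volume a b := by
  rw [intervalIntegrable_iff_integrableOn_Icc_of_le hab] at hp ⊢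
  exact hp.mul_continuousOn (hφ.comp hw hw0) isCompact_Icc

theorem flowIneqOn_zero {p φ : ℝ → ℝ} (hφ0 : φ 0 = 0) (a b : ℝ) :
    FlowIneqOn p φ (fun _ => 0) a b := by
  simp [FlowIneqOn, hφ0, continuousOn_const]

namespace FlowIneqOn

variable {p φ z w : ℝ → ℝ} {a b : ℝ}

theorem congr (h : FlowIneqOn p φ z a b) (hab : a ≤ b) (heq : EqOn w z (Icc a b)) :
    FlowIneqOn p φ w a b := by
  have hint : EqOn (fun s => p s * φ (w s)) (fun s => p s * φ (z s)) (uIcc a b) := by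
    intro s hs
    rw [uIcc_of_le hab] at hs
    simp only [heq hs]
  refine ⟨h.1.congr heq, h.2.1.congr fun s hs => (hint (uIoc_subset_uIcc hs)).symm, ?_⟩
  rw [intervalIntegral.integral_congr hint, heq ⟨le_rfl, hab⟩, heq ⟨hab, le_rfl⟩]
  exact h.2.2

theorem trans {m : ℝ} (h₁ : FlowIneqOn p φ z a m) (h₂ : FlowIneqOn p φ z m b) (ham : a ≤ m)
    (hmb : m ≤ b) : FlowIneqOn p φ z a b := by
  refine ⟨?_, h₁.2.1.trans h₂.2.1, ?_⟩
  · rw [← Icc_union_Icc_eq_Icc ham hmb]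
    exact h₁.1.union_of_isClosed h₂.1 isClosed_Icc isClosed_Icc
  · rw [← intervalIntegral.integral_add_adjacent_intervals h₁.2.1 h₂.2.1]
    linarith [h₁.2.2, h₂.2.2]

theorem le (h : FlowIneqOn p φ z a b) (hφ : ClassP φ) (hp : ∀ s, 0 ≤ p s) (hab : a ≤ b)
    (hz : ∀ s ∈ Icc a b, 0 ≤ z s) : z b ≤ z a := by
  have : 0 ≤ ∫ s in a..b, p s * φ (z s) :=
    intervalIntegral.integral_nonneg hab fun s hs => mul_nonneg (hp s) (hφ.nonneg (hz s hs))
  linarith [h.2.2]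

end FlowIneqOn

theorem flowIneqOn_of_forall_lt {p φ w : ℝ → ℝ} {a b : ℝ} (hφ : ClassP φ) (hp : LocIntNN p)
    (ha : 0 ≤ a) (hab : a < b) (hw0 : ∀ s ∈ Icc a b, 0 ≤ w s)
    (hflow : ∀ u ∈ Ico a b, FlowIneqOn p φ w a u) (hb : Tendsto w (𝓝[<] b) (𝓝 (w b))) :
    FlowIneqOn p φ w a b := by
  have hcont : ContinuousOn w (Icc a b) := by
    intro x hx
    rcases hx.2.lt_or_eq with hxb | rfl
    · have hm : x < (x + b) / 2 := by linarith
      refine ((hflow _ ⟨hx.1.trans hm.le, by linarith⟩).1 x ⟨hx.1, hm.le⟩).mono_of_mem_nhdsWithin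
        ?_
      filter_upwards [self_mem_nhdsWithin, nhdsWithin_le_nhds (Iio_mem_nhds hm)] with y hy hym
      exact ⟨hy.1, hym.le⟩
    · exact (continuousWithinAt_Iio_iff_Iic.1 hb).mono Icc_subset_Iic_self
  have hint := intervalIntegrable_mul_comp hφ.1 (hp.2 a b ha hab.le) hab.le hcont hw0
  refine ⟨hcont, hint, ?_⟩
  have hprim : Tendsto (fun u => ∫ s in a..u, p s * φ (w s)) (𝓝[<] b)
      (𝓝 (∫ s in a..b, p s * φ (w s))) := by
    have h := intervalIntegral.continuousOn_primitive_interval' hint left_mem_uIcc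
    rw [uIcc_of_le hab.le] at h
    rw [← nhdsWithin_Ioo_eq_nhdsLT hab]
    exact (h b ⟨hab.le, le_rfl⟩).tendsto.mono_left (nhdsWithin_mono _ Ioo_subset_Icc_self)
  have hlim := (hb.sub_const (w a)).add hprim
  have hev : ∀ᶠ u in 𝓝[<] b, w u - w a + ∫ s in a..u, p s * φ (w s) ≤ 0 := by
    filter_upwards [Ioo_mem_nhdsLT hab] with u hu
    linarith [(hflow u ⟨hu.1.le, hu.2⟩).2.2]
  linarith [le_of_tendsto hlim hev]

section Barrier

variable {p φ : ℝ → ℝ} {T₁ c K a b : ℝ}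

theorem antitoneOn_const_sub_mul_integral (hp : LocIntNN p) (hT₁ : 0 ≤ T₁) (hK0 : 0 ≤ K) :
    AntitoneOn (fun t => c - K * ∫ s in T₁..t, p s) (Ici T₁) := by
  intro u hu v hv huv
  have hsub := intervalIntegral.integral_interval_sub_left
    (hp.2 T₁ v hT₁ hv) (hp.2 T₁ u hT₁ hu)
  have hnn : 0 ≤ ∫ s in u..v, p s := intervalIntegral.integral_nonneg huv fun s _ => hp.1 s
  dsimp only
  nlinarith

theorem continuousOn_const_sub_mul_integral (hp : LocIntNN p) (hT₁ : 0 ≤ T₁) (ha : T₁ ≤ a)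
    (hab : a ≤ b) : ContinuousOn (fun t => c - K * ∫ s in T₁..t, p s) (Icc a b) := by
  have h := intervalIntegral.continuousOn_primitive_interval'
    (hp.2 T₁ b hT₁ (ha.trans hab)) left_mem_uIcc
  rw [uIcc_of_le (ha.trans hab)] at h
  exact continuousOn_const.sub (continuousOn_const.mul (h.mono (Icc_subset_Icc_left ha)))

theorem flowIneqOn_const_sub_mul_integral (hφ : ClassP φ) (hp : LocIntNN p) (hT₁ : 0 ≤ T₁)
    (hK : ∀ x ∈ Icc 0 c, φ x ≤ K) (hK0 : 0 ≤ K) (ha : T₁ ≤ a) (hab : a ≤ b)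
    (hb : 0 ≤ c - K * ∫ s in T₁..b, p s) :
    FlowIneqOn p φ (fun t => c - K * ∫ s in T₁..t, p s) a b := by
  have hanti := antitoneOn_const_sub_mul_integral (c := c) hp hT₁ hK0
  have hcont := continuousOn_const_sub_mul_integral (c := c) (K := K) hp hT₁ ha hab
  have hrange : ∀ u ∈ Icc a b, c - K * ∫ s in T₁..u, p s ∈ Icc 0 c := by
    intro u hu
    have hu' : u ∈ Ici T₁ := ha.trans hu.1
    refine ⟨hb.trans (hanti hu' (hu'.trans hu.2) hu.2), ?_⟩
    simpa using hanti self_mem_Ici hu' hu'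
  have hpab : IntervalIntegrable p volume a b := hp.2 a b (hT₁.trans ha) hab
  have hint := intervalIntegrable_mul_comp hφ.1 hpab hab hcont fun u hu => (hrange u hu).1
  refine ⟨hcont, hint, ?_⟩
  calc (c - K * ∫ s in T₁..b, p s) - (c - K * ∫ s in T₁..a, p s) = -∫ s in a..b, K * p s := by
        rw [intervalIntegral.integral_const_mul, ← intervalIntegral.integral_interval_sub_left
          (hp.2 T₁ b hT₁ (ha.trans hab)) (hp.2 T₁ a hT₁ ha)]
        ring
    _ ≤ -∫ s in a..b, p s * φ (c - K * ∫ s in T₁..s, p s) := by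
        gcongr
        refine intervalIntegral.integral_mono_on hab hint (hpab.const_mul K) fun s hs => ?_
        rw [mul_comm K (p s)]
        exact mul_le_mul_of_nonneg_left (hK _ (hrange s hs)) (hp.1 s)

/-- `φ ≤ K` on `[0, c]` makes `K p` an upper bound for the rate `p φ` that the flow inequality
requires, and below `0` the barrier is cut off at the rest point `0` of `φ`. -/
theorem flowIneqOn_max_const_sub_mul_integral (hφ : ClassP φ) (hp : LocIntNN p) (hT₁ : 0 ≤ T₁)
    (hc : 0 ≤ c) (hK : ∀ x ∈ Icc 0 c, φ x ≤ K) (ha : T₁ ≤ a) (hab : a ≤ b) :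
    FlowIneqOn p φ (fun t => max (c - K * ∫ s in T₁..t, p s) 0) a b := by
  set h : ℝ → ℝ := fun t => c - K * ∫ s in T₁..t, p s
  have hK0 : 0 ≤ K := hφ.2.1 ▸ hK 0 ⟨le_rfl, hc⟩
  have hanti : AntitoneOn h (Ici T₁) := antitoneOn_const_sub_mul_integral hp hT₁ hK0
  have hpos : ∀ u v, T₁ ≤ u → u ≤ v → 0 ≤ h v → FlowIneqOn p φ (fun t => max (h t) 0) u v :=
    fun u v hu huv hv => (flowIneqOn_const_sub_mul_integral hφ hp hT₁ hK hK0 hu huv hv).congr huv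
      fun t ht => max_eq_left (hv.trans (hanti (hu.trans ht.1) (hu.trans huv) ht.2))
  have hzero : ∀ u v, T₁ ≤ u → u ≤ v → h u ≤ 0 → FlowIneqOn p φ (fun t => max (h t) 0) u v :=
    fun u v hu huv hu0 => (flowIneqOn_zero hφ.2.1 u v).congr huv
      fun t ht => max_eq_right ((hanti hu (hu.trans ht.1) ht.1).trans hu0)
  rcases le_total 0 (h b) with hb | hb
  · exact hpos a b ha hab hb
  rcases le_total (h a) 0 with ha0 | ha0
  · exact hzero a b ha hab ha0
  obtain ⟨r, hr, hr0⟩ := intermediate_value_Icc' hab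
    (continuousOn_const_sub_mul_integral hp hT₁ ha hab) ⟨hb, ha0⟩
  exact (hpos a r ha hr.1 hr0.ge).trans (hzero r b (ha.trans hr.1) hr.2 hr0.le) hr.1 hr.2

end Barrier

namespace IsCompSol

variable {p φ ψ : ℝ → ℝ} {γ : Set ℝ} {t0 z0 : ℝ} {T : EReal} {z : ℝ → ℝ}

theorem flowIneqOn (hz : IsCompSol p φ ψ γ t0 T z0 z) {a b : ℝ} (ha : t0 ≤ a) (hab : a ≤ b)
    (hb : (b : EReal) < T) (hγ : γ ∩ Ioc a b = ∅) : FlowIneqOn p φ z a b :=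
  ⟨hz.flow_cont a b ha hab hb hγ, hz.flow_int a b ha hab hb hγ⟩

theorem le_of_inter_Ioc_eq_empty (hz : IsCompSol p φ ψ γ t0 T z0 z) (hφ : ClassP φ)
    (hp : ∀ s, 0 ≤ p s) {a b : ℝ} (ha : t0 ≤ a) (hab : a ≤ b) (hb : (b : EReal) < T)
    (hγ : γ ∩ Ioc a b = ∅) : z b ≤ z a :=
  (hz.flowIneqOn ha hab hb hγ).le hφ hp hab fun s hs =>
    hz.nonneg s (ha.trans hs.1) (lt_of_le_of_lt (EReal.coe_le_coe_iff.2 hs.2) hb)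

theorem eq_zero_of_inter_Ioc_eq_empty (hz : IsCompSol p φ ψ γ t0 T z0 z) (hφ : ClassP φ)
    (hp : ∀ s, 0 ≤ p s) {a b : ℝ} (ha : t0 ≤ a) (hab : a ≤ b) (hb : (b : EReal) < T)
    (hγ : γ ∩ Ioc a b = ∅) (hza : z a = 0) : z b = 0 :=
  le_antisymm (hza ▸ hz.le_of_inter_Ioc_eq_empty hφ hp ha hab hb hγ)
    (hz.nonneg b (ha.trans hab) hb)

theorem eq_zero_of_eqOn_Ico (hz : IsCompSol p φ ψ γ t0 T z0 z) (hψ0 : ψ 0 = 0) {s τ : ℝ}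
    (hs : t0 ≤ s) (hsτ : s < τ) (hτ : τ ∈ γ) (hτT : (τ : EReal) < T)
    (hzero : ∀ u ∈ Ico s τ, z u = 0) : z τ = 0 := by
  obtain ⟨L, hL, hzL⟩ := hz.jump τ hτ (hs.trans_lt hsτ) hτT
  have hL0 : L = 0 := by
    refine tendsto_nhds_unique hL (tendsto_const_nhds.congr' ?_)
    filter_upwards [Ioo_mem_nhdsLT hsτ] with u hu
    exact (hzero u ⟨hu.1.le, hu.2⟩).symm
  rw [hL0, hψ0] at hzL
  exact le_antisymm hzL (hz.nonneg τ (hs.trans hsτ.le) hτT)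

theorem eq_zero_of_eq_zero (hz : IsCompSol p φ ψ γ t0 T z0 z) (hφ : ClassP φ) (hψ0 : ψ 0 = 0)
    (hp : ∀ s, 0 ≤ p s) (hγ : IsImpulseSeq γ) {s : ℝ} (hs : t0 ≤ s) (hzs : z s = 0) :
    ∀ t, s ≤ t → (t : EReal) < T → z t = 0 := by
  suffices key : ∀ n : ℕ, ∀ t, s ≤ t → (t : EReal) < T → (γ ∩ Ioc s t).ncard ≤ n → z t = 0 from
    fun t hst htT => key _ t hst htT le_rfl
  intro n
  induction n with
  | zero =>
    intro t hst htT hcard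
    exact hz.eq_zero_of_inter_Ioc_eq_empty hφ hp hs hst htT
      ((ncard_eq_zero (hγ.finite_inter_Ioc s t)).1 (Nat.le_zero.1 hcard)) hzs
  | succ n ih =>
    intro t hst htT hcard
    rcases (γ ∩ Ioc s t).eq_empty_or_nonempty with hF | hF
    · exact hz.eq_zero_of_inter_Ioc_eq_empty hφ hp hs hst htT hF hzs
    obtain ⟨τ, ⟨hτ, hsτ, hτt⟩, hmax⟩ := exists_max_image _ id (hγ.finite_inter_Ioc s t) hF
    have hτT : (τ : EReal) < T := lt_of_le_of_lt (EReal.coe_le_coe_iff.2 hτt) htT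
    have hzero : ∀ u ∈ Ico s τ, z u = 0 := by
      intro u ⟨hsu, huτ⟩
      refine ih u hsu (lt_of_le_of_lt (EReal.coe_le_coe_iff.2 (huτ.le.trans hτt)) htT) ?_
      have hssub : γ ∩ Ioc s u ⊂ γ ∩ Ioc s t :=
        (ssubset_iff_of_subset (inter_subset_inter_right _ (Ioc_subset_Ioc_right
          (huτ.le.trans hτt)))).2 ⟨τ, ⟨hτ, hsτ, hτt⟩, fun h => huτ.not_ge h.2.2⟩
      have := ncard_lt_ncard hssub (hγ.finite_inter_Ioc s t)
      omega
    refine hz.eq_zero_of_inter_Ioc_eq_empty hφ hp (hs.trans hsτ.le) hτt htT ?_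
      (hz.eq_zero_of_eqOn_Ico hψ0 hs hsτ hτ hτT hzero)
    refine eq_empty_iff_forall_notMem.2 fun x ⟨hx, hτx, hxt⟩ => ?_
    exact hτx.not_ge (hmax x ⟨hx, hsτ.trans hτx, hxt⟩)

theorem exists_tendsto_nhdsLT {a T₁ : ℝ} (hz : IsCompSol p φ ψ γ t0 T₁ z0 z) (hφ : ClassP φ)
    (hp : ∀ s, 0 ≤ p s) (ha : t0 ≤ a) (haT : a < T₁) (hγ : γ ∩ Ioo a T₁ = ∅) :
    ∃ L, 0 ≤ L ∧ Tendsto z (𝓝[<] T₁) (𝓝 L) := by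
  have hlt : ∀ u ∈ Ioo a T₁, (u : EReal) < T₁ := fun u hu => EReal.coe_lt_coe_iff.2 hu.2
  have hanti : AntitoneOn z (Ioo a T₁) := fun u hu v hv huv =>
    hz.le_of_inter_Ioc_eq_empty hφ hp (ha.trans hu.1.le) huv (hlt v hv) <|
      subset_empty_iff.1 <| hγ ▸ inter_subset_inter_right _ fun x hx =>
        ⟨hu.1.trans hx.1, hx.2.trans_lt hv.2⟩
  have hnn : ∀ u ∈ Ioo a T₁, 0 ≤ z u := fun u hu => hz.nonneg u (ha.trans hu.1.le) (hlt u hu)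
  have hL := hanti.tendsto_nhdsWithin_Ioo_left (nonempty_Ioo.2 haT)
    ⟨0, forall_mem_image.2 hnn⟩
  refine ⟨_, ge_of_tendsto hL ?_, hL⟩
  filter_upwards [Ioo_mem_nhdsLT haT] using hnn

theorem glue {T₁ T₂ L : ℝ} {g : ℝ → ℝ} (hz : IsCompSol p φ ψ γ t0 T₁ z0 z) (hφ : ClassP φ)
    (hp : LocIntNN p) (ht0 : 0 ≤ t0) (hL : Tendsto z (𝓝[<] T₁) (𝓝 L)) (hT : T₁ < T₂)
    (hγ : γ ∩ Ioo T₁ T₂ = ∅) (hg0 : ∀ t ∈ Ico T₁ T₂, 0 ≤ g t)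
    (hg : ∀ a b, T₁ ≤ a → a ≤ b → b < T₂ → FlowIneqOn p φ g a b)
    (hgL : T₁ ∉ γ → g T₁ = L) (hgψ : T₁ ∈ γ → g T₁ ≤ ψ L) :
    IsCompSol p φ ψ γ t0 T₂ z0 (fun t => if t < T₁ then z t else g t) := by
  set w : ℝ → ℝ := fun t => if t < T₁ then z t else g t
  have hwz : ∀ t < T₁, w t = z t := fun t ht => if_pos ht
  have hwg : ∀ t, T₁ ≤ t → w t = g t := fun t ht => if_neg ht.not_gt
  have hlt : ∀ t < T₁, (t : EReal) < T₁ := fun t ht => EReal.coe_lt_coe_iff.2 ht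
  have ht0T : t0 < T₁ := EReal.coe_lt_coe_iff.1 hz.dom
  have hwL : Tendsto w (𝓝[<] T₁) (𝓝 L) :=
    hL.congr' (eventually_nhdsWithin_of_forall fun t ht => (hwz t ht).symm)
  have hw0 : ∀ t, t0 ≤ t → t < T₂ → 0 ≤ w t := fun t ht htT => by
    rcases lt_or_ge t T₁ with h | h
    · exact hwz t h ▸ hz.nonneg t ht (hlt t h)
    · exact hwg t h ▸ hg0 t ⟨h, htT⟩
  have hleft : ∀ a b, t0 ≤ a → a ≤ b → b < T₁ → γ ∩ Ioc a b = ∅ → FlowIneqOn p φ w a b :=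
    fun a b ha hab hb hγab => (hz.flowIneqOn ha hab (hlt b hb) hγab).congr hab
      fun t ht => hwz t (ht.2.trans_lt hb)
  have hright : ∀ a b, T₁ ≤ a → a ≤ b → b < T₂ → FlowIneqOn p φ w a b :=
    fun a b ha hab hb => (hg a b ha hab hb).congr hab fun t ht => hwg t (ha.trans ht.1)
  have hflow : ∀ a b, t0 ≤ a → a ≤ b → b < T₂ → γ ∩ Ioc a b = ∅ → FlowIneqOn p φ w a b := by
    intro a b ha hab hb hγab
    rcases lt_or_ge b T₁ with hbT | hTb
    · exact hleft a b ha hab hbT hγab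
    rcases le_or_gt T₁ a with hTa | haT
    · exact hright a b hTa hab hb
    have hT₁γ : T₁ ∉ γ := fun h => (eq_empty_iff_forall_notMem.1 hγab) T₁ ⟨h, haT, hTb⟩
    refine (flowIneqOn_of_forall_lt hφ hp (ht0.trans ha) haT
      (fun t ht => hw0 t (ha.trans ht.1) (ht.2.trans_lt (hTb.trans_lt hb)))
      (fun u hu => hleft a u ha hu.1 hu.2 (subset_empty_iff.1 (hγab ▸
        inter_subset_inter_right _ (Ioc_subset_Ioc_right (hu.2.le.trans hTb)))))
      (by rw [hwg T₁ le_rfl, hgL hT₁γ]; exact hwL)).trans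
      (hright T₁ b le_rfl hTb hb) haT.le hTb
  refine ⟨EReal.coe_lt_coe_iff.2 (ht0T.trans hT), (hwz t0 ht0T).trans hz.init,
    fun t ht htT => hw0 t ht (EReal.coe_lt_coe_iff.1 htT),
    fun a b ha hab hb hγab => (hflow a b ha hab (EReal.coe_lt_coe_iff.1 hb) hγab).1,
    fun a b ha hab hb hγab => (hflow a b ha hab (EReal.coe_lt_coe_iff.1 hb) hγab).2,
    fun τ hτ htτ hτT => ?_⟩
  rcases lt_trichotomy τ T₁ with hτT₁ | rfl | hT₁τ
  · obtain ⟨L', hL', hzL'⟩ := hz.jump τ hτ htτ (hlt τ hτT₁)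
    refine ⟨L', hL'.congr' (eventually_nhdsWithin_of_forall fun t ht => ?_), hwz τ hτT₁ ▸ hzL'⟩
    exact (hwz t (lt_trans ht hτT₁)).symm
  · exact ⟨L, hwL, hwg τ le_rfl ▸ hgψ hτ⟩
  · exact absurd ⟨hτ, hT₁τ, EReal.coe_lt_coe_iff.1 hτT⟩ (eq_empty_iff_forall_notMem.1 hγ τ)

theorem exists_extension {T₁ : ℝ} (hz : IsCompSol p φ ψ γ t0 T₁ z0 z) (hφ : ClassP φ)
    (hψ : ClassP ψ) (hp : LocIntNN p) (hγ : IsImpulseSeq γ) (ht0 : 0 ≤ t0) :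
    ∃ (T' : EReal) (z' : ℝ → ℝ), (T₁ : EReal) < T' ∧ IsCompSol p φ ψ γ t0 T' z0 z' ∧
      ∀ t, t0 ≤ t → (t : EReal) < T₁ → z' t = z t := by
  have ht0T : t0 < T₁ := EReal.coe_lt_coe_iff.1 hz.dom
  obtain ⟨ε, hε, hγl, hγr⟩ := hγ.exists_pos_inter_Ioo_eq_empty T₁
  obtain ⟨L, hL0, hL⟩ := hz.exists_tendsto_nhdsLT hφ hp.1 (le_max_left t0 (T₁ - ε))
    (max_lt ht0T (by linarith)) (subset_empty_iff.1 (hγl ▸ inter_subset_inter_right _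
      (Ioo_subset_Ioo_left (le_max_right _ _))))
  obtain ⟨c, hc0, hcL, hcψ⟩ : ∃ c, 0 ≤ c ∧ (T₁ ∉ γ → c = L) ∧ (T₁ ∈ γ → c ≤ ψ L) := by
    by_cases h : T₁ ∈ γ
    · exact ⟨0, le_rfl, absurd h, fun _ => hψ.nonneg hL0⟩
    · exact ⟨L, hL0, fun _ => rfl, fun h' => absurd h' h⟩
  obtain ⟨K, hK⟩ := isCompact_Icc.bddAbove_image
    (hφ.1.mono (Icc_subset_Ici_self : Icc 0 c ⊆ Ici 0))
  have hgT₁ : max (c - K * ∫ s in T₁..T₁, p s) 0 = c := by simpa using hc0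
  refine ⟨(T₁ + ε : ℝ), _, EReal.coe_lt_coe_iff.2 (by linarith),
    hz.glue hφ hp ht0 hL (by linarith) hγr (fun t _ => le_max_right _ _)
      (fun a b ha hab _ => flowIneqOn_max_const_sub_mul_integral hφ hp (ht0.trans ht0T.le) hc0
        (fun x hx => hK (mem_image_of_mem φ hx)) ha hab)
      (fun h => hgT₁.trans (hcL h)) (fun h => hgT₁.trans_le (hcψ h)),
    fun t _ ht => if_pos (EReal.coe_lt_coe_iff.1 ht)⟩

end IsCompSol

/-- Lemma 4: if `φ, ψ` are of class `P` and `p` is nonnegative and locally integrable, then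
every maximally defined solution of the comparison system is forward complete
(`T = ∞`); moreover, if a solution vanishes at some time `s ≥ t0`, it vanishes at every
later time of its domain. -/
theorem compSol_complete_and_zero (φ ψ p : ℝ → ℝ) (hφ : ClassP φ) (hψ : ClassP ψ)
    (hp : LocIntNN p) :
    (∀ (γ : Set ℝ) (t0 : ℝ) (T : EReal) (z0 : ℝ) (z : ℝ → ℝ),
      IsImpulseSeq γ → 0 ≤ t0 → 0 ≤ z0 →
        IsMaxCompSol p φ ψ γ t0 T z0 z → T = ⊤) ∧
    (∀ (γ : Set ℝ) (t0 : ℝ) (T : EReal) (z0 : ℝ) (z : ℝ → ℝ),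
      IsImpulseSeq γ → 0 ≤ t0 → 0 ≤ z0 → IsCompSol p φ ψ γ t0 T z0 z →
        ∀ s : ℝ, t0 ≤ s → (s : EReal) < T → z s = 0 →
          ∀ t : ℝ, s ≤ t → (t : EReal) < T → z t = 0) := by
  refine ⟨fun γ t0 T z0 z hγ ht0 _ ⟨hz, hmax⟩ => ?_,
    fun γ t0 T z0 z hγ _ _ hz s hs _ hzs => hz.eq_zero_of_eq_zero hφ hψ.2.1 hp.1 hγ hs hzs⟩
  induction T using EReal.rec with
  | bot => exact absurd hz.dom not_lt_bot
  | coe T₁ => exact absurd (hz.exists_extension hφ hψ hp hγ ht0) hmax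
  | top => rfl
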